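/- The average subset entropies are concave in the subset size: for every integer k with 1 ≤ k ≤ n−1, r_{k+1}(X) + r_{k−1}(X) ≤ 2·r_k(X); equivalently u_k(X) ≥ 0 for all 1 ≤ k ≤ n−1. -/

import Mathlib

open MeasureTheory Finset

noncomputable section

variable {Ω : Type*} [MeasurableSpace Ω]

/-- Shannon entropy of a finite-valued random variable `Z` under the measure `μ`
(with the convention that the entropy of an empty tuple is `negMulLog (μ univ) = 0`
for a probability measure). -/
def ent {α : Type*} [Fintype α] (μ : Measure Ω) (Z : Ω → α) : ℝ :=
  ∑ z : α, Real.negMulLog ((μ (Z ⁻¹' {z})).toReal)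

/-- Conditional entropy `H(A | B)`. -/
def condEnt {α β : Type*} [Fintype α] [Fintype β] (μ : Measure Ω)
    (A : Ω → α) (B : Ω → β) : ℝ :=
  ent μ (fun ω => (A ω, B ω)) - ent μ B

/-- Mutual information `I(A ; B)`. -/
def mi {α β : Type*} [Fintype α] [Fintype β] (μ : Measure Ω)
    (A : Ω → α) (B : Ω → β) : ℝ :=
  ent μ A + ent μ B - ent μ (fun ω => (A ω, B ω))

/-- Conditional mutual information `I(A ; B | C)`. -/
def cmi {α β γ : Type*} [Fintype α] [Fintype β] [Fintype γ] (μ : Measure Ω)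
    (A : Ω → α) (B : Ω → β) (C : Ω → γ) : ℝ :=
  ent μ (fun ω => (A ω, C ω)) + ent μ (fun ω => (B ω, C ω))
    - ent μ (fun ω => (A ω, B ω, C ω)) - ent μ C

/-- The sub-tuple `X^a = (X_i)_{i ∈ a}` of the random vector `X = (X_1, …, X_n)`. -/
def restr {n : ℕ} {S : Type*} (X : Fin n → Ω → S) (a : Finset (Fin n)) :
    Ω → (a → S) :=
  fun ω i => X i.1 ω

/-- Average subset entropy `r_k(X) = C(n,k)⁻¹ ∑_{|a| = k} H(X^a)`. -/
def rE {n : ℕ} {S : Type*} [Fintype S] (μ : Measure Ω) (X : Fin n → Ω → S) (k : ℕ) : ℝ :=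
  ((n.choose k : ℝ))⁻¹ *
    ∑ a ∈ univ.powerset.filter (fun a : Finset (Fin n) => a.card = k), ent μ (restr X a)

/-- Average conditional pairwise mutual information
`u_k(X) = (C(n,k+1) C(k+1,2))⁻¹ ∑_{i<j} ∑_{|a| = k-1, i,j ∉ a} I(X_i ; X_j | X^a)`. -/
def uI {n : ℕ} {S : Type*} [Fintype S] (μ : Measure Ω) (X : Fin n → Ω → S) (k : ℕ) : ℝ :=
  ((n.choose (k + 1) : ℝ) * ((k + 1).choose 2 : ℝ))⁻¹ *
    ∑ p ∈ univ.filter (fun p : Fin n × Fin n => p.1 < p.2),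
      ∑ a ∈ (univ \ ({p.1, p.2} : Finset (Fin n))).powerset.filter
          (fun a : Finset (Fin n) => a.card = k - 1),
        cmi μ (X p.1) (X p.2) (restr X a)


/-!
Write `H a` for the entropy of `X^a`. By the chain rule,
`I(X_i ; X_j | X^a) = H (a ∪ {i}) + H (a ∪ {j}) - H (a ∪ {i, j}) - H a`, so counting the pairs
`(i < j, a)` according to the set they produce turns the sum defining `u_k` into a combination of
the level sums `∑_{|c| = m} H c` for `m = k - 1, k, k + 1`; after normalising by binomial
coefficients it is exactly `u_k = 2 r_k - r_{k+1} - r_{k-1}`. A conditional mutual information is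
nonnegative because, for each value of the condition, Gibbs' inequality `log x ≤ x - 1` compares
the joint law of the pair with the product of its marginals. Hence `u_k ≥ 0`, which is the
concavity.
-/

open Real

theorem sum_sum_negMulLog_add_negMulLog_sum_le {α β : Type*} [Fintype α] [Fintype β]
    (p : α → β → ℝ) (hp : ∀ a b, 0 ≤ p a b) :
    ∑ a, ∑ b, negMulLog (p a b) + negMulLog (∑ a, ∑ b, p a b)
      ≤ ∑ a, negMulLog (∑ b, p a b) + ∑ b, negMulLog (∑ a, p a b) := by
  set r : α → ℝ := fun a => ∑ b, p a b
  set s : β → ℝ := fun b => ∑ a, p a b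
  set t : ℝ := ∑ a, r a
  have hpr : ∀ a b, p a b ≤ r a := fun a b => single_le_sum (fun b _ => hp a b) (mem_univ b)
  have hps : ∀ a b, p a b ≤ s b := fun a b => single_le_sum (fun a _ => hp a b) (mem_univ a)
  have hrt : ∀ a, r a ≤ t := fun a =>
    single_le_sum (fun a _ => sum_nonneg fun b _ => hp a b) (mem_univ a)
  -- Gibbs, pointwise: `log x ≤ x - 1` against the product `r a * s b / t` of the marginals.
  have gibbs : ∀ a b, negMulLog (p a b) + p a b * log (r a) + p a b * log (s b)
      - p a b * log t ≤ r a * s b / t - p a b := by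
    intro a b
    rcases (hp a b).eq_or_lt with h0 | h0
    · rw [← h0]
      simp only [negMulLog_zero, zero_mul, add_zero, sub_zero]
      have hr := (hp a b).trans (hpr a b)
      exact div_nonneg (mul_nonneg hr ((hp a b).trans (hps a b))) (hr.trans (hrt a))
    · have hr := h0.trans_le (hpr a b)
      have hs := h0.trans_le (hps a b)
      have ht := hr.trans_le (hrt a)
      have key := mul_le_mul_of_nonneg_left
        (log_le_sub_one_of_pos (show 0 < r a * s b / t / p a b by positivity)) h0.le
      rw [log_div (by positivity) h0.ne', log_div (by positivity) ht.ne',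
        log_mul hr.ne' hs.ne'] at key
      rw [negMulLog]
      field_simp at key ⊢
      linarith
  have hts : ∑ b, s b = t := sum_comm
  have hsum := sum_le_sum fun a (_ : a ∈ univ) => sum_le_sum fun b (_ : b ∈ univ) => gibbs a b
  simp only [sum_add_distrib, sum_sub_distrib, ← sum_mul, ← sum_div, ← mul_sum] at hsum
  rw [sum_comm (f := fun a b => p a b * log (s b))] at hsum
  simp only [← sum_mul] at hsum
  -- `t * t / t = t` also holds for `t = 0`, so no case split is needed.
  rw [hts, mul_self_div_self] at hsum
  simp only [negMulLog] at hsum ⊢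
  simp only [neg_mul, sum_neg_distrib] at hsum ⊢
  linarith

theorem sum_sum_sum_negMulLog_add_le {α β γ : Type*} [Fintype α] [Fintype β] [Fintype γ]
    (p : α → β → γ → ℝ) (hp : ∀ a b c, 0 ≤ p a b c) :
    ∑ a, ∑ b, ∑ c, negMulLog (p a b c) + ∑ c, negMulLog (∑ a, ∑ b, p a b c)
      ≤ ∑ a, ∑ c, negMulLog (∑ b, p a b c) + ∑ b, ∑ c, negMulLog (∑ a, p a b c) := by
  have hcomm :
      ∑ a, ∑ b, ∑ c, negMulLog (p a b c) = ∑ c, ∑ a, ∑ b, negMulLog (p a b c) := by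
    simp only [sum_comm (s := (univ : Finset γ))]
  rw [hcomm, sum_comm (s := (univ : Finset α)), sum_comm (s := (univ : Finset β)),
    ← sum_add_distrib, ← sum_add_distrib]
  exact sum_le_sum fun c _ => sum_sum_negMulLog_add_negMulLog_sum_le (p · · c) (hp · · c)

theorem ent_comp_eq_sum_fiber {δ β : Type*} [Fintype δ] [Fintype β] [DecidableEq β]
    [MeasurableSpace δ] [MeasurableSingletonClass δ] (μ : Measure Ω) [IsFiniteMeasure μ]
    {W : Ω → δ} (hW : Measurable W) (f : δ → β) :
    ent μ (fun ω => f (W ω))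
      = ∑ y, negMulLog (∑ x with f x = y, μ.real (W ⁻¹' {x})) := by
  refine sum_congr rfl fun y _ => ?_
  rw [sum_measureReal_preimage_singleton _ fun x _ => hW (measurableSet_singleton x)]
  congr 3
  ext ω
  simp

theorem cmi_nonneg {α β γ : Type*} [Fintype α] [Fintype β] [Fintype γ]
    [MeasurableSpace α] [MeasurableSpace β] [MeasurableSpace γ]
    [MeasurableSingletonClass α] [MeasurableSingletonClass β] [MeasurableSingletonClass γ]
    (μ : Measure Ω) [IsFiniteMeasure μ] {A : Ω → α} {B : Ω → β} {C : Ω → γ}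
    (hA : Measurable A) (hB : Measurable B) (hC : Measurable C) :
    0 ≤ cmi μ A B C := by
  classical
  have hW : Measurable fun ω => (A ω, B ω, C ω) := hA.prodMk (hB.prodMk hC)
  set p : α → β → γ → ℝ :=
    fun a b c => μ.real ((fun ω => (A ω, B ω, C ω)) ⁻¹' {(a, b, c)})
  have hABC : ent μ (fun ω => (A ω, B ω, C ω)) = ∑ a, ∑ b, ∑ c, negMulLog (p a b c) := by
    simp only [ent, Fintype.sum_prod_type]
    rfl
  have hAC : ent μ (fun ω => (A ω, C ω)) = ∑ a, ∑ c, negMulLog (∑ b, p a b c) := by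
    rw [ent_comp_eq_sum_fiber μ hW fun x => (x.1, x.2.2)]
    simp [p, sum_filter, Fintype.sum_prod_type, ite_and, sum_ite_irrel]
  have hBC : ent μ (fun ω => (B ω, C ω)) = ∑ b, ∑ c, negMulLog (∑ a, p a b c) := by
    rw [ent_comp_eq_sum_fiber μ hW fun x => (x.2.1, x.2.2)]
    simp [p, sum_filter, Fintype.sum_prod_type]
  have hC : ent μ C = ∑ c, negMulLog (∑ a, ∑ b, p a b c) := by
    rw [ent_comp_eq_sum_fiber μ hW fun x => x.2.2]
    simp [p, sum_filter, Fintype.sum_prod_type]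
  have := sum_sum_sum_negMulLog_add_le p fun a b c => measureReal_nonneg
  rw [cmi, hABC, hAC, hBC, hC]
  linarith

theorem ent_comp_of_injective {α β : Type*} [Fintype α] [Fintype β] (μ : Measure Ω)
    (Z : Ω → α) {f : α → β} (hf : Function.Injective f) :
    ent μ (fun ω => f (Z ω)) = ent μ Z := by
  refine (Fintype.sum_of_injective f hf _ _ (fun y hy => ?_) fun x => ?_).symm
  · have : (fun ω => f (Z ω)) ⁻¹' {y} = ∅ := by
      ext ω
      simpa using fun h => hy ⟨Z ω, h⟩
    simp [this]
  · congr 3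
    ext ω
    simp [hf.eq_iff]

section restr

variable {n : ℕ} {S : Type*}

theorem restr_insert_injective (i : Fin n) (a : Finset (Fin n)) :
    Function.Injective fun f : ↥(insert i a) → S =>
      (f ⟨i, mem_insert_self i a⟩, fun x : a => f ⟨x.1, mem_insert_of_mem x.2⟩) := by
  intro f g hfg
  simp only [Prod.mk.injEq, funext_iff] at hfg
  funext ⟨x, hx⟩
  rcases mem_insert.1 hx with rfl | hxa
  · exact hfg.1
  · exact hfg.2 ⟨x, hxa⟩

variable [Fintype S] (μ : Measure Ω) (X : Fin n → Ω → S)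

theorem ent_prodMk_restr (i : Fin n) (a : Finset (Fin n)) :
    ent μ (fun ω => (X i ω, restr X a ω)) = ent μ (restr X (insert i a)) :=
  ent_comp_of_injective μ (restr X (insert i a)) (restr_insert_injective i a)

theorem cmi_restr_eq (i j : Fin n) (a : Finset (Fin n)) :
    cmi μ (X i) (X j) (restr X a)
      = ent μ (restr X (insert i a)) + ent μ (restr X (insert j a))
        - ent μ (restr X (insert i (insert j a))) - ent μ (restr X a) := by
  have hij : ent μ (fun ω => (X i ω, X j ω, restr X a ω))
      = ent μ (fun ω => (X i ω, restr X (insert j a) ω)) :=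
    ent_comp_of_injective μ (fun ω => (X i ω, restr X (insert j a) ω))
      (Function.injective_id.prodMap (restr_insert_injective j a))
  rw [cmi, ent_prodMk_restr, ent_prodMk_restr, hij, ent_prodMk_restr]

end restr

theorem sum_powersetCard_compl_union {α ι M : Type*} [Fintype α] [DecidableEq α]
    [AddCommMonoid M] (P : Finset ι) (D E : ι → Finset α) {l e : ℕ}
    (hED : ∀ p ∈ P, E p ⊆ D p) (hE : ∀ p ∈ P, #(E p) = e) (H : Finset α → M) :
    ∑ p ∈ P, ∑ a ∈ powersetCard l (D p)ᶜ, H (E p ∪ a)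
      = ∑ c ∈ powersetCard (l + e) univ, #{p ∈ P | c ∩ D p = E p} • H c := by
  have fiber : ∀ p ∈ P, ∑ a ∈ powersetCard l (D p)ᶜ, H (E p ∪ a)
      = ∑ c ∈ powersetCard (l + e) univ with c ∩ D p = E p, H c := by
    intro p hp
    have hEp := hED p hp
    refine sum_nbij' (E p ∪ ·) (· \ E p) (fun a ha => ?_) (fun c hc => ?_) (fun a ha => ?_)
      (fun c hc => ?_) fun _ _ => rfl
    all_goals simp only [mem_filter, mem_powersetCard, subset_univ, true_and,
      subset_compl_iff_disjoint_right] at *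
    · have hdisj : Disjoint (E p) a := Disjoint.mono_left hEp ha.1.symm
      refine ⟨by rw [card_union_of_disjoint hdisj, ha.2, hE p hp, add_comm], ?_⟩
      rw [union_inter_distrib_right, inter_eq_left.2 hEp, disjoint_iff_inter_eq_empty.1 ha.1,
        union_empty]
    · have hEc : E p ⊆ c := hc.2 ▸ inter_subset_left
      refine ⟨?_, by rw [card_sdiff_of_subset hEc, hc.1, hE p hp, Nat.add_sub_cancel]⟩
      rw [disjoint_iff_inter_eq_empty, sdiff_inter_right_comm, hc.2, sdiff_self, bot_eq_empty]
    · exact union_sdiff_cancel_left (Disjoint.mono_left hEp ha.1.symm)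
    · exact union_sdiff_of_subset (hc.2 ▸ inter_subset_left)
  rw [sum_congr rfl fiber, sum_comm' (t' := powersetCard (l + e) univ)
    (s' := fun c => {p ∈ P | c ∩ D p = E p}) fun p c => ?_]
  · simp only [sum_const]
  · simp only [mem_filter]
    tauto

theorem card_product_filter_lt_add_card_product_filter_lt {α : Type*} [LinearOrder α]
    {s t : Finset α} (h : Disjoint s t) :
    #{x ∈ s ×ˢ t | x.1 < x.2} + #{x ∈ t ×ˢ s | x.1 < x.2} = #s * #t := by
  have swap : #{x ∈ t ×ˢ s | x.1 < x.2} = #{x ∈ s ×ˢ t | ¬x.1 < x.2} :=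
    card_equiv (Equiv.prodComm α α) fun x => by
      simp only [mem_filter, mem_product, Equiv.prodComm_apply, Prod.fst_swap, Prod.snd_swap,
        not_lt]
      grind [disjoint_left]
  rw [swap, card_filter_add_card_filter_not, card_product]

section pairs

variable {α M : Type*} [Fintype α] [LinearOrder α]

theorem filter_lt_inter_pair_eq {c : Finset α} {E : α × α → Finset α} {s t : Finset α}
    (h : ∀ i j, i < j → (c ∩ {i, j} = E (i, j) ↔ i ∈ s ∧ j ∈ t)) :
    {p ∈ ({p | p.1 < p.2} : Finset (α × α)) | c ∩ {p.1, p.2} = E p}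
      = {x ∈ s ×ˢ t | x.1 < x.2} := by
  ext ⟨i, j⟩
  simp only [mem_filter, mem_univ, true_and, mem_product]
  grind

variable (H : Finset α → M) (l : ℕ)

section AddCommMonoid

variable [AddCommMonoid M]

theorem sum_lt_pairs_insert_fst_add_insert_snd :
    ∑ p : α × α with p.1 < p.2, ∑ a ∈ powersetCard l {p.1, p.2}ᶜ, H (insert p.1 a)
      + ∑ p : α × α with p.1 < p.2, ∑ a ∈ powersetCard l {p.1, p.2}ᶜ, H (insert p.2 a)
      = ((l + 1) * (Fintype.card α - (l + 1))) • ∑ c ∈ powersetCard (l + 1) univ, H c := by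
  have h1 := sum_powersetCard_compl_union {p : α × α | p.1 < p.2} (fun p => {p.1, p.2})
    (fun p => {p.1}) (l := l) (e := 1) (by simp) (by simp) H
  have h2 := sum_powersetCard_compl_union {p : α × α | p.1 < p.2} (fun p => {p.1, p.2})
    (fun p => {p.2}) (l := l) (e := 1) (by simp) (by simp) H
  simp only [← insert_eq] at h1 h2
  rw [h1, h2, ← sum_add_distrib, smul_sum]
  refine sum_congr rfl fun c hc => ?_
  rw [← add_smul, filter_lt_inter_pair_eq (s := c) (t := cᶜ),
    filter_lt_inter_pair_eq (s := cᶜ) (t := c),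
    card_product_filter_lt_add_card_product_filter_lt disjoint_compl_right,
    card_compl, (mem_powersetCard.1 hc).2]
  all_goals
    intro i j hij
    simp only [Finset.ext_iff, mem_inter, mem_insert, mem_singleton, mem_compl]
    grind

theorem sum_lt_pairs_insert_insert :
    ∑ p : α × α with p.1 < p.2,
        ∑ a ∈ powersetCard l {p.1, p.2}ᶜ, H (insert p.1 (insert p.2 a))
      = (l + 2).choose 2 • ∑ c ∈ powersetCard (l + 2) univ, H c := by
  have h := sum_powersetCard_compl_union {p : α × α | p.1 < p.2} (fun p => {p.1, p.2})
    (fun p => {p.1, p.2}) (l := l) (by simp) (fun p hp => card_pair (mem_filter.1 hp).2.ne) H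
  simp only [← insert_eq, insert_union] at h
  rw [h, smul_sum]
  refine sum_congr rfl fun c hc => ?_
  rw [filter_lt_inter_pair_eq (s := c) (t := c), card_product_filter_lt,
    (mem_powersetCard.1 hc).2]
  intro i j _
  simp only [inter_eq_right, insert_subset_iff, singleton_subset_iff]

theorem sum_lt_pairs_powersetCard_compl :
    ∑ p : α × α with p.1 < p.2, ∑ a ∈ powersetCard l {p.1, p.2}ᶜ, H a
      = (Fintype.card α - l).choose 2 • ∑ c ∈ powersetCard l univ, H c := by
  have h := sum_powersetCard_compl_union {p : α × α | p.1 < p.2} (fun p => {p.1, p.2})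
    (fun _ => ∅) (l := l) (e := 0) (by simp) (by simp) H
  simp only [empty_union, add_zero] at h
  rw [h, smul_sum]
  refine sum_congr rfl fun c hc => ?_
  rw [filter_lt_inter_pair_eq (s := cᶜ) (t := cᶜ), card_product_filter_lt, card_compl,
    (mem_powersetCard.1 hc).2]
  intro i j _
  simp only [← disjoint_iff_inter_eq_empty, disjoint_insert_right, disjoint_singleton_right,
    mem_compl]

end AddCommMonoid

theorem sum_lt_pairs_powersetCard_eq [AddCommGroup M] :
    ∑ p : α × α with p.1 < p.2, ∑ a ∈ powersetCard l {p.1, p.2}ᶜ,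
        (H (insert p.1 a) + H (insert p.2 a) - H (insert p.1 (insert p.2 a)) - H a)
      = ((l + 1) * (Fintype.card α - (l + 1))) • ∑ c ∈ powersetCard (l + 1) univ, H c
        - (l + 2).choose 2 • ∑ c ∈ powersetCard (l + 2) univ, H c
        - (Fintype.card α - l).choose 2 • ∑ c ∈ powersetCard l univ, H c := by
  simp only [sum_add_distrib, sum_sub_distrib]
  rw [sum_lt_pairs_insert_fst_add_insert_snd, sum_lt_pairs_insert_insert,
    sum_lt_pairs_powersetCard_compl]

end pairs

theorem choose_add_two_mul_choose_two (n l : ℕ) :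
    n.choose (l + 2) * (l + 2).choose 2 = n.choose l * (n - l).choose 2 := by
  rw [← Nat.choose_symm_add, Nat.choose_mul (by omega), Nat.add_sub_cancel_left]

theorem choose_add_two_mul_choose_two_mul_two (n l : ℕ) :
    n.choose (l + 2) * (l + 2).choose 2 * 2 = n.choose (l + 1) * ((l + 1) * (n - (l + 1))) := by
  have h := Nat.add_one_mul_choose_eq (l + 1) 1
  rw [Nat.choose_one_right] at h
  rw [mul_assoc, ← h, ← mul_assoc, Nat.choose_succ_right_eq]
  ring

section average

variable {n : ℕ} {S : Type*} [Fintype S] (μ : Measure Ω) (X : Fin n → Ω → S)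

theorem rE_eq_inv_choose_mul_sum (m : ℕ) :
    rE μ X m = (n.choose m : ℝ)⁻¹ * ∑ a ∈ powersetCard m univ, ent μ (restr X a) := by
  rw [rE, powersetCard_eq_filter]

theorem uI_eq_two_mul_rE_sub {k : ℕ} (hk : 1 ≤ k) (hkn : k + 1 ≤ n) :
    uI μ X k = 2 * rE μ X k - rE μ X (k + 1) - rE μ X (k - 1) := by
  obtain ⟨l, rfl⟩ : ∃ l, k = l + 1 := ⟨k - 1, by omega⟩
  have hsum := sum_lt_pairs_powersetCard_eq (fun a => ent μ (restr X a)) l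
  simp only [Fintype.card_fin, nsmul_eq_mul] at hsum
  simp only [uI, Nat.add_sub_cancel, ← powersetCard_eq_filter, ← compl_eq_univ_sdiff,
    cmi_restr_eq, hsum, rE_eq_inv_choose_mul_sum]
  have hC : ∀ m ≤ n, (n.choose m : ℝ) ≠ 0 := fun m hm => by
    exact_mod_cast (Nat.choose_pos hm).ne'
  have hN : ((l + 2).choose 2 : ℝ) ≠ 0 := by exact_mod_cast (Nat.choose_pos (by omega)).ne'
  have e12 :
      ((n.choose (l + 2) : ℝ) * ((l + 2).choose 2 : ℕ))⁻¹ * ((l + 1) * (n - (l + 1)) : ℕ)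
        = 2 * (n.choose (l + 1) : ℝ)⁻¹ := by
    rw [inv_mul_eq_iff_eq_mul₀ (mul_ne_zero (hC _ hkn) hN)]
    field_simp [hC (l + 1) (by omega)]
    rw [mul_comm]
    exact_mod_cast (choose_add_two_mul_choose_two_mul_two n l).symm
  have e3 : ((n.choose (l + 2) : ℝ) * ((l + 2).choose 2 : ℕ))⁻¹ * ((l + 2).choose 2 : ℕ)
      = (n.choose (l + 2) : ℝ)⁻¹ := by
    field_simp
  have e0 : ((n.choose (l + 2) : ℝ) * ((l + 2).choose 2 : ℕ))⁻¹ * ((n - l).choose 2 : ℕ)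
      = (n.choose l : ℝ)⁻¹ := by
    rw [inv_mul_eq_iff_eq_mul₀ (mul_ne_zero (hC _ hkn) hN)]
    field_simp [hC l (by omega)]
    rw [mul_comm]
    exact_mod_cast (choose_add_two_mul_choose_two n l).symm
  linear_combination (∑ c ∈ powersetCard (l + 1) univ, ent μ (restr X c)) * e12
    - (∑ c ∈ powersetCard (l + 2) univ, ent μ (restr X c)) * e3
    - (∑ c ∈ powersetCard l univ, ent μ (restr X c)) * e0

theorem uI_nonneg [MeasurableSpace S] [MeasurableSingletonClass S] [IsFiniteMeasure μ]
    (hX : ∀ i, Measurable (X i)) (k : ℕ) : 0 ≤ uI μ X k :=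
  mul_nonneg (by positivity) <| sum_nonneg fun _ _ => sum_nonneg fun _ _ =>
    cmi_nonneg μ (hX _) (hX _) (measurable_pi_lambda _ fun i => hX i)

end average

theorem r_concave_u_nonneg_general {Ω S : Type*} [MeasurableSpace Ω]
    [Fintype S] [MeasurableSpace S] [MeasurableSingletonClass S]
    {n : ℕ} (μ : Measure Ω) [IsProbabilityMeasure μ]
    (X : Fin n → Ω → S) (hX : ∀ i, Measurable (X i)) :
    ∀ k, 1 ≤ k → k ≤ n - 1 →
      rE μ X (k + 1) + rE μ X (k - 1) ≤ 2 * rE μ X k ∧ 0 ≤ uI μ X k := by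
  intro k hk hkn
  have hu := uI_nonneg μ X hX k
  refine ⟨?_, hu⟩
  rw [uI_eq_two_mul_rE_sub μ X hk (by omega)] at hu
  linarith

/-- The average subset entropies are concave in the subset size:
`r_{k+1}(X) + r_{k-1}(X) ≤ 2 r_k(X)` for all `1 ≤ k ≤ n-1`; equivalently `u_k(X) ≥ 0`. -/
theorem r_concave_u_nonneg {Ω S : Type*} [MeasurableSpace Ω]
    [Fintype S] [MeasurableSpace S] [MeasurableSingletonClass S]
    {n : ℕ} (hn : 2 ≤ n) (μ : Measure Ω) [IsProbabilityMeasure μ]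
    (X : Fin n → Ω → S) (hX : ∀ i, Measurable (X i)) :
    ∀ k, 1 ≤ k → k ≤ n - 1 →
      rE μ X (k + 1) + rE μ X (k - 1) ≤ 2 * rE μ X k ∧ 0 ≤ uI μ X k :=
  r_concave_u_nonneg_general μ X hX
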